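/- arXiv:2511.00897 — 3 statements merged into one kernel-verified Lean document; each statement's English description precedes it below -/
import Mathlib

section
/- If p is a prime that does not divide any term of the sequence m, then coordinatewise p-th power map on the solenoid Σ_m, (z_n) ↦ (z_nᵖ), is a surjection of Σ_m onto itself whose fibers each have exactly p elements. -/
/-!
Since `p` is coprime to every `m n`, Bézout shows that whenever `x ^ p = y ^ (m n)` there is a
unique `t` with `t ^ (m n) = x` and `t ^ p = y`. Hence a thread `z` of `p`-th roots of `w ∈ Σ_m`
is determined by `z 0` and can be built from any `p`-th root of `w 0`, so the fiber over `w` is in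
bijection with the `p`-th roots of `w 0` in the circle, of which there are exactly `p`.
-/

theorem Nat.Coprime.eq_of_pow_eq_pow {G : Type*} [Group G] {p k : ℕ} (h : p.Coprime k)
    {x y : G} (hp : x ^ p = y ^ p) (hk : x ^ k = y ^ k) : x = y := by
  obtain ⟨a, b, hab⟩ := Nat.isCoprime_iff_coprime.2 h
  have bezout (g : G) : g = (g ^ p) ^ a * (g ^ k) ^ b := by
    rw [← zpow_natCast, ← zpow_natCast, ← zpow_mul, ← zpow_mul, ← zpow_add, mul_comm (p : ℤ),
      mul_comm (k : ℤ), hab, zpow_one]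
  rw [bezout x, bezout y, hp, hk]

theorem Nat.Coprime.exists_pow_eq_and_pow_eq {G : Type*} [CommGroup G] {p k : ℕ}
    (h : p.Coprime k) {x y : G} (hxy : x ^ p = y ^ k) : ∃ t : G, t ^ k = x ∧ t ^ p = y := by
  obtain ⟨a, b, hab⟩ := Nat.isCoprime_iff_coprime.2 h
  have hxy' : x ^ (p : ℤ) = y ^ (k : ℤ) := by exact_mod_cast hxy
  refine ⟨y ^ a * x ^ b, ?_, ?_⟩ <;> rw [← zpow_natCast]
  · calc (y ^ a * x ^ b) ^ (k : ℤ) = (y ^ (k : ℤ)) ^ a * x ^ (b * k) := by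
          rw [mul_zpow, ← zpow_mul, ← zpow_mul, ← zpow_mul, mul_comm a]
      _ = x := by rw [← hxy', ← zpow_mul, ← zpow_add, mul_comm (p : ℤ), hab, zpow_one]
  · calc (y ^ a * x ^ b) ^ (p : ℤ) = y ^ (a * p) * (x ^ (p : ℤ)) ^ b := by
          rw [mul_zpow, ← zpow_mul, ← zpow_mul, ← zpow_mul, mul_comm b]
      _ = y := by rw [hxy', ← zpow_mul, ← zpow_add, mul_comm (k : ℤ), hab, zpow_one]

theorem Circle.natCard_pow_eq (n : ℕ) [NeZero n] (c : Circle) :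
    Nat.card {u : Circle // u ^ n = c} = n := by
  obtain ⟨u₀, rfl⟩ := (Circle.isQuotientCoveringMap_npow n).surjective c
  calc Nat.card {u : Circle // u ^ n = u₀ ^ n}
      = Nat.card ((powMonoidHom n : Circle →* Circle) ⁻¹' {powMonoidHom n u₀}) := rfl
    _ = Nat.card (powMonoidHom n : Circle →* Circle).ker :=
        Nat.card_congr (MonoidHom.fiberEquivKer _ _)
    _ = Nat.card (rootsOfUnity n Circle) :=
        Nat.card_congr <| _root_.toUnits.toEquiv.subtypeEquiv fun u => by
          simp [mem_rootsOfUnity, ← map_pow]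
    _ = n := HasEnoughRootsOfUnity.natCard_rootsOfUnity Circle n

def solenoid (G : Type*) [Monoid G] (m : ℕ → ℕ) : Set (ℕ → G) :=
  {z | ∀ n, z n = z (n + 1) ^ m n}

namespace solenoid

variable {G : Type*} {m : ℕ → ℕ} {p : ℕ}

theorem pow_mem [Monoid G] {z : ℕ → G} (hz : z ∈ solenoid G m) :
    (fun n => z n ^ p) ∈ solenoid G m := fun n => by
  simp only [hz n, pow_right_comm]

theorem eq_of_pow_eq [Group G] (hpm : ∀ n, p.Coprime (m n)) {z z' : ℕ → G}
    (hz : z ∈ solenoid G m) (hz' : z' ∈ solenoid G m) (hpow : ∀ n, z n ^ p = z' n ^ p)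
    (h₀ : z 0 = z' 0) : z = z' := by
  funext n
  induction n with
  | zero => exact h₀
  | succ n ih => exact (hpm n).eq_of_pow_eq_pow (hpow _) (by rw [← hz n, ← hz' n, ih])

variable [CommGroup G]

theorem exists_pow_eq (hpm : ∀ n, p.Coprime (m n)) {w : ℕ → G} (hw : w ∈ solenoid G m) {u : G}
    (hu : u ^ p = w 0) : ∃ z ∈ solenoid G m, z 0 = u ∧ ∀ n, z n ^ p = w n := by
  choose next hnext using fun n (x : {x : G // x ^ p = w n}) =>
    (hpm n).exists_pow_eq_and_pow_eq (x.2.trans (hw n))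
  let root : ∀ n, {x : G // x ^ p = w n} :=
    fun n => Nat.rec ⟨u, hu⟩ (fun n x => ⟨next n x, (hnext n x).2⟩) n
  exact ⟨fun n => (root n).1, fun n => (hnext n (root n)).1.symm, rfl, fun n => (root n).2⟩

theorem natCard_pow_fiber (hpm : ∀ n, p.Coprime (m n)) {w : ℕ → G} (hw : w ∈ solenoid G m) :
    Nat.card {z | z ∈ solenoid G m ∧ (fun n => z n ^ p) = w} =
      Nat.card {u : G // u ^ p = w 0} := by
  refine Nat.card_congr (.ofBijective (fun z => ⟨z.1 0, congrFun z.2.2 0⟩) ⟨?_, ?_⟩)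
  · rintro ⟨z, hz, hzw⟩ ⟨z', hz', hz'w⟩ h₀
    refine Subtype.ext (eq_of_pow_eq hpm hz hz' (fun n => ?_) (congrArg Subtype.val h₀))
    exact (congrFun hzw n).trans (congrFun hz'w n).symm
  · rintro ⟨u, hu⟩
    obtain ⟨z, hz, hz₀, hzw⟩ := exists_pow_eq hpm hw hu
    exact ⟨⟨z, hz, funext hzw⟩, Subtype.ext hz₀⟩

end solenoid

theorem solenoid_pth_power_surjective_fibers_general (m : ℕ → ℕ)
    (p : ℕ) (hp : p.Prime) (hpm : ∀ n, ¬ p ∣ m n) :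
    let S : Set (ℕ → Circle) := {z | ∀ n : ℕ, z n = z (n + 1) ^ m n}
    let F : (ℕ → Circle) → (ℕ → Circle) := fun z n => z n ^ p
    Set.MapsTo F S S ∧ Set.SurjOn F S S ∧
      ∀ w ∈ S, Nat.card ({z : ℕ → Circle | z ∈ S ∧ F z = w}) = p := by
  intro S F
  have hcop (n : ℕ) : p.Coprime (m n) := hp.coprime_iff_not_dvd.2 (hpm n)
  have : NeZero p := ⟨hp.ne_zero⟩
  have hfiber (w) (hw : w ∈ S) : Nat.card {z | z ∈ S ∧ F z = w} = p :=
    (solenoid.natCard_pow_fiber hcop hw).trans (Circle.natCard_pow_eq p (w 0))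
  refine ⟨fun z hz => solenoid.pow_mem hz, fun w hw => ?_, hfiber⟩
  obtain ⟨⟨z, hz, hzw⟩⟩ := (Nat.card_pos_iff.1 (hfiber w hw ▸ hp.pos)).1
  exact ⟨z, hz, hzw⟩

/-- If `p` is a prime dividing no term of the sequence `m` of positive integers, then
the coordinatewise `p`-th power map on the solenoid `Σ_m` maps `Σ_m` onto itself and
each of its fibers has exactly `p` elements. -/
theorem solenoid_pth_power_surjective_fibers (m : ℕ → ℕ) (hm : ∀ n, 0 < m n)
    (p : ℕ) (hp : p.Prime) (hpm : ∀ n, ¬ p ∣ m n) :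
    let S : Set (ℕ → Circle) := {z | ∀ n : ℕ, z n = z (n + 1) ^ m n}
    let F : (ℕ → Circle) → (ℕ → Circle) := fun z n => z n ^ p
    Set.MapsTo F S S ∧ Set.SurjOn F S S ∧
      ∀ w ∈ S, Nat.card ({z : ℕ → Circle | z ∈ S ∧ F z = w}) = p :=
  solenoid_pth_power_surjective_fibers_general m p hp hpm
end

section
/- The Baumslag–Solitar group BS(m,n) = ⟨x, t : t⁻¹ xᵐ t = xⁿ⟩ with m, n nonzero is non-cohopfian whenever there exists an integer d ≥ 2 coprime to both m and n: the subgroup generated by x^d and t is a proper subgroup isomorphic to BS(m,n). -/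
/-- The relator set of the Baumslag–Solitar group `BS(m,n) = ⟨x, t : t⁻¹ xᵐ t = xⁿ⟩`,
with `x` the generator `true` and `t` the generator `false`. -/
def bsRels (m n : ℤ) : Set (FreeGroup Bool) :=
  {(FreeGroup.of false)⁻¹ * (FreeGroup.of true) ^ m * FreeGroup.of false *
    ((FreeGroup.of true) ^ n)⁻¹}

/-- The Baumslag–Solitar group `BS(m,n)`. -/
abbrev BaumslagSolitar (m n : ℤ) : Type := PresentedGroup (bsRels m n)


open Function Subgroup

namespace BSAux
open HNNExtension

variable {G H : Type*} [Group G] [Group H] {A B : Subgroup G} {φ : A ≃* B}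
  {A' B' : Subgroup H} {φ' : A' ≃* B'}

theorem toSubgroup_map_iff (f : G →* H)
    (hA : ∀ g, f g ∈ A' ↔ g ∈ A) (hB : ∀ g, f g ∈ B' ↔ g ∈ B) (u : ℤˣ) (g : G) :
    f g ∈ toSubgroup A' B' u ↔ g ∈ toSubgroup A B u := by
  rcases Int.units_eq_one_or u with rfl | rfl <;> simp [hA, hB]

/-- Functoriality of HNN extensions. -/
def mapHNN (f : G →* H) (hA : ∀ g, f g ∈ A' ↔ g ∈ A)
    (hφ : ∀ a : A, f (φ a) = (φ' ⟨f a, (hA a).2 a.2⟩ : H)) :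
    HNNExtension G A B φ →* HNNExtension H A' B' φ' :=
  lift (of.comp f) t (fun a => by
    simp only [MonoidHom.comp_apply, hφ a]
    exact t_mul_of ⟨f a, (hA a).2 a.2⟩)

@[simp] theorem mapHNN_of (f : G →* H) (hA : ∀ g, f g ∈ A' ↔ g ∈ A)
    (hφ : ∀ a : A, f (φ a) = (φ' ⟨f a, (hA a).2 a.2⟩ : H)) (g : G) :
    mapHNN f hA hφ (of g) = of (f g) :=
  lift_of _ _ _ g

@[simp] theorem mapHNN_t (f : G →* H) (hA : ∀ g, f g ∈ A' ↔ g ∈ A)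
    (hφ : ∀ a : A, f (φ a) = (φ' ⟨f a, (hA a).2 a.2⟩ : H)) :
    mapHNN (φ := φ) (φ' := φ') f hA hφ t = t := by
  simp [mapHNN]

theorem exists_reducedWord_map (f : G →* H) (hA : ∀ g, f g ∈ A' ↔ g ∈ A)
    (hB : ∀ g, f g ∈ B' ↔ g ∈ B)
    (hφ : ∀ a : A, f (φ a) = (φ' ⟨f a, (hA a).2 a.2⟩ : H))
    (w : NormalWord.ReducedWord G A B) :
    ∃ w' : NormalWord.ReducedWord H A' B',
      w'.prod φ' = mapHNN f hA hφ (w.prod φ) ∧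
      w'.toList.map Prod.fst = w.toList.map Prod.fst := by
  refine ⟨⟨f w.head, w.toList.map (fun p => (p.1, f p.2)), ?_⟩, ?_, ?_⟩
  · rw [List.isChain_map]
    exact w.chain.imp (fun a b h hm => h ((toSubgroup_map_iff f hA hB _ _).1 hm))
  · simp only [NormalWord.ReducedWord.prod, map_mul, map_list_prod, List.map_map]
    simp [Function.comp_def, map_zpow]
  · simp

theorem mem_of_range_of_mapHNN (f : G →* H) (hA : ∀ g, f g ∈ A' ↔ g ∈ A)
    (hB : ∀ g, f g ∈ B' ↔ g ∈ B)
    (hφ : ∀ a : A, f (φ a) = (φ' ⟨f a, (hA a).2 a.2⟩ : H))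
    (g : HNNExtension G A B φ)
    (hg : mapHNN f hA hφ g ∈ (of.range : Subgroup (HNNExtension H A' B' φ'))) :
    ∃ h : G, of h = g := by
  rcases NormalWord.TransversalPair.nonempty G A B with ⟨dd⟩
  set w : NormalWord dd := NormalWord.equiv φ dd g with hw
  have hwg : w.prod φ = g := (NormalWord.equiv φ dd).symm_apply_apply g
  obtain ⟨w', hw'1, hw'2⟩ := exists_reducedWord_map f hA hB hφ w.toReducedWord
  have hnil' : w'.toList = [] := by
    apply ReducedWord.toList_eq_nil_of_mem_of_range φ'
    rw [hw'1]
    show mapHNN f hA hφ (w.prod φ) ∈ _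
    rw [hwg]; exact hg
  have hnil : w.toList = [] := by
    have h2 : w.toList.map Prod.fst = [] := by rw [← hw'2, hnil']; simp
    simpa using h2
  refine ⟨w.head, ?_⟩
  rw [← hwg]
  show _ = w.toReducedWord.prod φ
  rw [NormalWord.ReducedWord.prod]
  have : w.toReducedWord.toList = w.toList := rfl
  rw [this, hnil]
  simp

theorem mapHNN_injective (f : G →* H) (hf : Injective f) (hA : ∀ g, f g ∈ A' ↔ g ∈ A)
    (hB : ∀ g, f g ∈ B' ↔ g ∈ B)
    (hφ : ∀ a : A, f (φ a) = (φ' ⟨f a, (hA a).2 a.2⟩ : H)) :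
    Injective (mapHNN f hA hφ) := by
  rw [injective_iff_map_eq_one]
  intro g hg
  obtain ⟨h, rfl⟩ := mem_of_range_of_mapHNN f hA hB hφ g (by rw [hg]; exact one_mem _)
  rw [mapHNN_of] at hg
  have h1 : f h = 1 := HNNExtension.of_injective (φ := φ') (show of (f h) = of 1 by simpa using hg)
  have h2 : h = 1 := hf (by simpa using h1)
  rw [h2, map_one]

end BSAux


open Function Subgroup

namespace BSAux
open HNNExtension

variable {G H : Type*} [Group G] [Group H] {A B : Subgroup G} {φ : A ≃* B}
  {A' B' : Subgroup H} {φ' : A' ≃* B'}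

theorem closure_pair_inv (a b : G) :
    Subgroup.closure {a, b⁻¹} = Subgroup.closure {a, b} := by
  apply le_antisymm
  · rw [Subgroup.closure_le]
    rintro x (rfl | rfl)
    · exact Subgroup.subset_closure (by simp)
    · exact inv_mem (Subgroup.subset_closure (by simp))
  · rw [Subgroup.closure_le]
    rintro x (rfl | rfl)
    · exact Subgroup.subset_closure (by simp)
    · have hb : x⁻¹ ∈ Subgroup.closure ({a, x⁻¹} : Set G) :=
        Subgroup.subset_closure (Set.mem_insert_of_mem _ rfl)
      simpa using inv_mem hb

end BSAux

namespace BSAux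
open Multiplicative Subgroup HNNExtension

lemma ofAdd_zpow' (a k : ℤ) : (ofAdd a) ^ k = ofAdd (k * a) := by
  rw [← ofAdd_zsmul, smul_eq_mul]

lemma mem_zpowers_iff_dvd (a : ℤ) (g : Multiplicative ℤ) :
    g ∈ zpowers (ofAdd a) ↔ a ∣ g.toAdd := by
  rw [Subgroup.mem_zpowers_iff]
  constructor
  · rintro ⟨k, rfl⟩
    exact ⟨k, by rw [ofAdd_zpow', toAdd_ofAdd, mul_comm]⟩
  · rintro ⟨k, hk⟩
    refine ⟨k, ?_⟩
    rw [ofAdd_zpow', ← ofAdd_toAdd g, hk]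
    ring_nf

/-- `ℤ ≃* zpowers (ofAdd m)` sending `k` to `ofAdd (k * m)`. -/
noncomputable def zeta (m : ℤ) (hm : m ≠ 0) :
    Multiplicative ℤ ≃* (zpowers (ofAdd m) : Subgroup (Multiplicative ℤ)) :=
  MulEquiv.ofBijective (zpowersHom _ (⟨ofAdd m, mem_zpowers _⟩ : zpowers (ofAdd m)))
    ⟨by
      intro a b hab
      have h : (ofAdd m) ^ toAdd a = (ofAdd m) ^ toAdd b := by
        have := congrArg (Subtype.val) hab
        simpa [zpowersHom_apply] using this
      rw [ofAdd_zpow', ofAdd_zpow'] at h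
      have := ofAdd.injective h
      have := mul_right_cancel₀ hm this
      exact toAdd.injective this,
     by
      rintro ⟨g, hg⟩
      rcases Subgroup.mem_zpowers_iff.mp hg with ⟨k, hk⟩
      exact ⟨ofAdd k, Subtype.ext (by simp [zpowersHom_apply, hk])⟩⟩

lemma zeta_apply (m : ℤ) (hm : m ≠ 0) (k : ℤ) :
    (zeta m hm (ofAdd k) : Multiplicative ℤ) = ofAdd (k * m) := by
  show ((zpowersHom _ (⟨ofAdd m, mem_zpowers _⟩ : zpowers (ofAdd m)) (ofAdd k) :
      zpowers (ofAdd m)) : Multiplicative ℤ) = ofAdd (k * m)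
  rw [zpowersHom_apply, toAdd_ofAdd]
  push_cast
  rw [ofAdd_zpow']

lemma exists_rep (m : ℤ) (a : (zpowers (ofAdd m) : Subgroup (Multiplicative ℤ))) :
    ∃ k : ℤ, (a : Multiplicative ℤ) = ofAdd (k * m) := by
  rcases Subgroup.mem_zpowers_iff.mp a.2 with ⟨k, hk⟩
  exact ⟨k, by rw [← hk, ofAdd_zpow']⟩

/-- The isomorphism `mℤ ≃ nℤ` underlying `BS(m,n)` as an HNN extension. -/
noncomputable def bsφ (m n : ℤ) (hm : m ≠ 0) (hn : n ≠ 0) :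
    (zpowers (ofAdd m) : Subgroup (Multiplicative ℤ)) ≃*
      (zpowers (ofAdd n) : Subgroup (Multiplicative ℤ)) :=
  (zeta m hm).symm.trans (zeta n hn)

lemma bsφ_coe (m n : ℤ) (hm : m ≠ 0) (hn : n ≠ 0)
    {a : (zpowers (ofAdd m) : Subgroup (Multiplicative ℤ))} {k : ℤ}
    (hk : (a : Multiplicative ℤ) = ofAdd (k * m)) :
    ((bsφ m n hm hn a : Multiplicative ℤ)) = ofAdd (k * n) := by
  have ha : a = zeta m hm (ofAdd k) := Subtype.ext (by rw [hk, zeta_apply])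
  rw [ha, bsφ, MulEquiv.trans_apply, MulEquiv.symm_apply_apply, zeta_apply]

end BSAux

namespace BSAux
open Function Subgroup Multiplicative HNNExtension

noncomputable abbrev HNNBS (m n : ℤ) (hm : m ≠ 0) (hn : n ≠ 0) : Type :=
  HNNExtension (Multiplicative ℤ) (zpowers (ofAdd m)) (zpowers (ofAdd n)) (bsφ m n hm hn)

lemma bs_rel (m n : ℤ) :
    (PresentedGroup.of false : BaumslagSolitar m n)⁻¹ * (PresentedGroup.of true) ^ m *
      PresentedGroup.of false * ((PresentedGroup.of true) ^ n)⁻¹ = 1 := by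
  have h : PresentedGroup.mk (bsRels m n)
      ((FreeGroup.of false)⁻¹ * (FreeGroup.of true) ^ m * FreeGroup.of false *
        ((FreeGroup.of true) ^ n)⁻¹) = 1 := by
    apply (QuotientGroup.eq_one_iff _).2
    exact Subgroup.subset_normalClosure rfl
  simp only [map_mul, map_inv, map_zpow] at h
  exact h

lemma bs_rel' (m n : ℤ) :
    (PresentedGroup.of false : BaumslagSolitar m n)⁻¹ * (PresentedGroup.of true) ^ m *
      PresentedGroup.of false = (PresentedGroup.of true) ^ n := by
  have h := bs_rel m n
  rw [mul_inv_eq_one] at h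
  exact h

lemma bs_conj_zpow (m n k : ℤ) :
    (PresentedGroup.of false : BaumslagSolitar m n)⁻¹ * (PresentedGroup.of true) ^ (k * m) *
      PresentedGroup.of false = (PresentedGroup.of true) ^ (k * n) := by
  set X : BaumslagSolitar m n := PresentedGroup.of true
  set T : BaumslagSolitar m n := PresentedGroup.of false
  have h := bs_rel' m n
  calc T⁻¹ * X ^ (k * m) * T = T⁻¹ * (X ^ m) ^ k * T := by rw [mul_comm k m, zpow_mul]
    _ = (T⁻¹ * X ^ m * T⁻¹⁻¹) ^ k := by rw [conj_zpow, inv_inv]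
    _ = (X ^ n) ^ k := by rw [inv_inv, h]
    _ = X ^ (k * n) := by rw [mul_comm k n, zpow_mul]

/-- `BS(m,n) → HNN`, `x ↦ of (ofAdd 1)`, `t ↦ t⁻¹`. -/
noncomputable def bsToHNN (m n : ℤ) (hm : m ≠ 0) (hn : n ≠ 0) :
    BaumslagSolitar m n →* HNNBS m n hm hn :=
  PresentedGroup.toGroup (f := fun b => bif b then of (ofAdd 1) else t⁻¹) (by
    intro r hr
    rw [bsRels, Set.mem_singleton_iff] at hr
    subst hr
    simp only [map_mul, map_inv, map_zpow, FreeGroup.lift_apply_of, Bool.cond_true, Bool.cond_false,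
      inv_inv]
    have h1 : (of (ofAdd 1) : HNNBS m n hm hn) ^ m = of (ofAdd m) := by
      rw [← map_zpow, ofAdd_zpow', mul_one]
    have h2 : (of (ofAdd 1) : HNNBS m n hm hn) ^ n = of (ofAdd n) := by
      rw [← map_zpow, ofAdd_zpow', mul_one]
    rw [h1, h2]
    have key : (t : HNNBS m n hm hn) * of (ofAdd m) = of (ofAdd n) * t := by
      have h := t_mul_of (φ := bsφ m n hm hn) ⟨ofAdd m, mem_zpowers _⟩
      rwa [show ((bsφ m n hm hn ⟨ofAdd m, mem_zpowers _⟩ : Multiplicative ℤ)) = ofAdd n by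
        simpa using bsφ_coe m n hm hn (a := ⟨ofAdd m, mem_zpowers _⟩) (k := 1)
          (by rw [one_mul])] at h
    rw [key]
    group)

/-- `HNN → BS(m,n)`, `of g ↦ x^(toAdd g)`, `t ↦ t⁻¹`. -/
noncomputable def hnnToBS (m n : ℤ) (hm : m ≠ 0) (hn : n ≠ 0) :
    HNNBS m n hm hn →* BaumslagSolitar m n :=
  HNNExtension.lift (zpowersHom _ (PresentedGroup.of true)) ((PresentedGroup.of false)⁻¹) (by
    intro a
    obtain ⟨k, hk⟩ := exists_rep m a
    rw [zpowersHom_apply, zpowersHom_apply, hk, bsφ_coe m n hm hn hk, toAdd_ofAdd, toAdd_ofAdd,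
      ← bs_conj_zpow m n k]
    group)

lemma hnnToBS_comp_bsToHNN (m n : ℤ) (hm : m ≠ 0) (hn : n ≠ 0) :
    (hnnToBS m n hm hn).comp (bsToHNN m n hm hn) = MonoidHom.id _ := by
  apply PresentedGroup.ext
  intro x
  cases x
  · simp only [MonoidHom.comp_apply, MonoidHom.id_apply, bsToHNN, PresentedGroup.toGroup.of,
      Bool.cond_false, hnnToBS, map_inv, lift_t, inv_inv]
  · simp only [MonoidHom.comp_apply, MonoidHom.id_apply, bsToHNN, PresentedGroup.toGroup.of,
      Bool.cond_true, hnnToBS, lift_of, zpowersHom_apply, toAdd_ofAdd, zpow_one]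

lemma bsToHNN_comp_hnnToBS (m n : ℤ) (hm : m ≠ 0) (hn : n ≠ 0) :
    (bsToHNN m n hm hn).comp (hnnToBS m n hm hn) = MonoidHom.id _ := by
  apply HNNExtension.hom_ext
  · apply MonoidHom.ext_mint
    simp only [MonoidHom.comp_apply, MonoidHom.id_apply, hnnToBS, lift_of, zpowersHom_apply,
      toAdd_ofAdd, zpow_one, bsToHNN, PresentedGroup.toGroup.of, Bool.cond_true]
  · simp only [MonoidHom.comp_apply, MonoidHom.id_apply, hnnToBS, lift_t, map_inv, bsToHNN,
      PresentedGroup.toGroup.of, Bool.cond_false, inv_inv]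

/-- The isomorphism `BS(m,n) ≃* HNN extension`. -/
noncomputable def bsEquiv (m n : ℤ) (hm : m ≠ 0) (hn : n ≠ 0) :
    BaumslagSolitar m n ≃* HNNBS m n hm hn :=
  MonoidHom.toMulEquiv (bsToHNN m n hm hn) (hnnToBS m n hm hn)
    (hnnToBS_comp_bsToHNN m n hm hn) (bsToHNN_comp_hnnToBS m n hm hn)

lemma bsEquiv_of_true (m n : ℤ) (hm : m ≠ 0) (hn : n ≠ 0) :
    bsEquiv m n hm hn (PresentedGroup.of true) = of (ofAdd 1) := by
  show bsToHNN m n hm hn (PresentedGroup.of true) = _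
  rw [bsToHNN, PresentedGroup.toGroup.of]
  rfl

lemma bsEquiv_of_false (m n : ℤ) (hm : m ≠ 0) (hn : n ≠ 0) :
    bsEquiv m n hm hn (PresentedGroup.of false) = t⁻¹ := by
  show bsToHNN m n hm hn (PresentedGroup.of false) = _
  rw [bsToHNN, PresentedGroup.toGroup.of]
  rfl

end BSAux

namespace BSAux
open Function Subgroup Multiplicative HNNExtension

/-- Multiplication by `d` as a map `ℤ →* ℤ` (multiplicatively). -/
noncomputable def delta (d : ℤ) : Multiplicative ℤ →* Multiplicative ℤ :=
  zpowersHom _ (ofAdd d)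

lemma delta_apply (d : ℤ) (g : Multiplicative ℤ) : delta d g = ofAdd (toAdd g * d) := by
  rw [delta, zpowersHom_apply, ofAdd_zpow']

lemma delta_injective (d : ℤ) (hd : d ≠ 0) : Injective (delta d) := by
  intro a b hab
  rw [delta_apply, delta_apply] at hab
  have := ofAdd.injective hab
  exact toAdd.injective (mul_right_cancel₀ hd this)

lemma delta_mem_iff (d m : ℤ) (hdm : IsCoprime d m) (g : Multiplicative ℤ) :
    delta d g ∈ zpowers (ofAdd m) ↔ g ∈ zpowers (ofAdd m) := by
  rw [mem_zpowers_iff_dvd, mem_zpowers_iff_dvd, delta_apply, toAdd_ofAdd]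
  exact ⟨fun h => hdm.symm.dvd_of_dvd_mul_right h, fun h => h.mul_right d⟩

lemma delta_compat (m n d : ℤ) (hm : m ≠ 0) (hn : n ≠ 0)
    (hdm : IsCoprime d m) (hdn : IsCoprime d n)
    (a : (zpowers (ofAdd m) : Subgroup (Multiplicative ℤ))) :
    delta d (bsφ m n hm hn a : Multiplicative ℤ) =
      (bsφ m n hm hn ⟨delta d (a : Multiplicative ℤ),
        (delta_mem_iff d m hdm _).2 a.2⟩ : Multiplicative ℤ) := by
  obtain ⟨k, hk⟩ := exists_rep m a
  rw [bsφ_coe m n hm hn hk, delta_apply, toAdd_ofAdd]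
  rw [bsφ_coe m n hm hn (k := k * d)
    (show (delta d (a : Multiplicative ℤ) : Multiplicative ℤ) = ofAdd (k * d * m) by
      rw [hk, delta_apply, toAdd_ofAdd]; ring_nf)]
  ring_nf

end BSAux


namespace BSAux
open Function Subgroup Multiplicative HNNExtension

/-- The injective endomorphism of the HNN extension sending `x ↦ x^d`, `t ↦ t`. -/
noncomputable def psi (m n d : ℤ) (hm : m ≠ 0) (hn : n ≠ 0)
    (hdm : IsCoprime d m) (hdn : IsCoprime d n) :
    HNNBS m n hm hn →* HNNBS m n hm hn :=
  mapHNN (delta d) (delta_mem_iff d m hdm) (delta_compat m n d hm hn hdm hdn)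

lemma psi_injective (m n d : ℤ) (hm : m ≠ 0) (hn : n ≠ 0) (hd : d ≠ 0)
    (hdm : IsCoprime d m) (hdn : IsCoprime d n) :
    Injective (psi m n d hm hn hdm hdn) :=
  mapHNN_injective (delta d) (delta_injective d hd) (delta_mem_iff d m hdm)
    (delta_mem_iff d n hdn) (delta_compat m n d hm hn hdm hdn)

lemma psi_range (m n d : ℤ) (hm : m ≠ 0) (hn : n ≠ 0)
    (hdm : IsCoprime d m) (hdn : IsCoprime d n) :
    (psi m n d hm hn hdm hdn).range =
      Subgroup.closure {of (ofAdd d), (t : HNNBS m n hm hn)} := by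
  apply le_antisymm
  · rintro x ⟨g, rfl⟩
    induction g using induction_on with
    | of h =>
      rw [show psi m n d hm hn hdm hdn (of h) = of (delta d h) from mapHNN_of _ _ _ h]
      have hδ : delta d h = (ofAdd d) ^ (toAdd h) := rfl
      rw [hδ, map_zpow]
      exact zpow_mem (Subgroup.subset_closure (Set.mem_insert _ _)) _
    | t =>
      rw [show psi m n d hm hn hdm hdn t = t from mapHNN_t _ _ _]
      exact Subgroup.subset_closure (Set.mem_insert_of_mem _ rfl)
    | mul x y hx hy => rw [map_mul]; exact mul_mem hx hy
    | inv x hx => rw [map_inv]; exact inv_mem hx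
  · rw [Subgroup.closure_le]
    rintro x (rfl | rfl)
    · refine ⟨of (ofAdd 1), ?_⟩
      rw [show psi m n d hm hn hdm hdn (of (ofAdd 1)) = of (delta d (ofAdd 1)) from
        mapHNN_of _ _ _ _]
      rw [delta_apply, toAdd_ofAdd, one_mul]
    · exact ⟨t, mapHNN_t _ _ _⟩

lemma map_closure_eq (m n d : ℤ) (hm : m ≠ 0) (hn : n ≠ 0)
    (hdm : IsCoprime d m) (hdn : IsCoprime d n) :
    Subgroup.map (bsEquiv m n hm hn : BaumslagSolitar m n →* HNNBS m n hm hn)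
      (Subgroup.closure {(PresentedGroup.of true : BaumslagSolitar m n) ^ d,
        PresentedGroup.of false}) = (psi m n d hm hn hdm hdn).range := by
  rw [MonoidHom.map_closure, Set.image_pair]
  have h1 : (bsEquiv m n hm hn : BaumslagSolitar m n →* HNNBS m n hm hn)
      ((PresentedGroup.of true : BaumslagSolitar m n) ^ d) = of (ofAdd d) := by
    rw [map_zpow]
    show (bsEquiv m n hm hn (PresentedGroup.of true)) ^ d = _
    rw [bsEquiv_of_true, ← map_zpow, ofAdd_zpow', mul_one]
  have h2 : (bsEquiv m n hm hn : BaumslagSolitar m n →* HNNBS m n hm hn)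
      (PresentedGroup.of false : BaumslagSolitar m n) = t⁻¹ := bsEquiv_of_false m n hm hn
  rw [h1, h2, closure_pair_inv, psi_range]

end BSAux

open BSAux Subgroup Multiplicative HNNExtension in
/-- If `m, n` are nonzero and `d ≥ 2` is coprime to both `m` and `n`, then the subgroup
of `BS(m,n)` generated by `x^d` and `t` is a proper subgroup isomorphic to `BS(m,n)`;
in particular `BS(m,n)` is non-cohopfian. -/
theorem baumslagSolitar_noncohopfian (m n d : ℤ) (hm : m ≠ 0) (hn : n ≠ 0)
    (hd : 2 ≤ d) (hdm : IsCoprime d m) (hdn : IsCoprime d n) :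
    Subgroup.closure ({(PresentedGroup.of true : BaumslagSolitar m n) ^ d,
        PresentedGroup.of false} : Set (BaumslagSolitar m n)) ≠ ⊤ ∧
    Nonempty ((Subgroup.closure ({(PresentedGroup.of true : BaumslagSolitar m n) ^ d,
        PresentedGroup.of false} : Set (BaumslagSolitar m n))) ≃* BaumslagSolitar m n) := by
  have hd0 : d ≠ 0 := by omega
  set S : Set (BaumslagSolitar m n) :=
    {(PresentedGroup.of true : BaumslagSolitar m n) ^ d, PresentedGroup.of false} with hS
  constructor
  · intro htop
    have hmap : Subgroup.map (bsEquiv m n hm hn : BaumslagSolitar m n →* HNNBS m n hm hn)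
        (Subgroup.closure S) = ⊤ := by
      rw [htop]
      exact Subgroup.map_top_of_surjective _ (bsEquiv m n hm hn).surjective
    have hrange : (psi m n d hm hn hdm hdn).range = ⊤ := by
      rw [← map_closure_eq m n d hm hn hdm hdn, ← hmap]
    have hx : (of (ofAdd 1) : HNNBS m n hm hn) ∈ (psi m n d hm hn hdm hdn).range := by
      rw [hrange]; trivial
    obtain ⟨g, hg⟩ := hx
    obtain ⟨h, rfl⟩ := mem_of_range_of_mapHNN (delta d) (delta_mem_iff d m hdm)
      (delta_mem_iff d n hdn) (delta_compat m n d hm hn hdm hdn) g ⟨ofAdd 1, hg.symm⟩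
    rw [show psi m n d hm hn hdm hdn (of h) = of (delta d h) from mapHNN_of _ _ _ h] at hg
    have h1 : delta d h = ofAdd 1 := HNNExtension.of_injective (φ := bsφ m n hm hn) hg
    rw [delta_apply] at h1
    have h2 : toAdd h * d = 1 := ofAdd.injective h1
    have h3 : d ∣ 1 := Dvd.intro_left _ h2
    have := Int.le_of_dvd one_pos h3
    omega
  · refine ⟨((bsEquiv m n hm hn).subgroupMap (Subgroup.closure S)).trans
      ((MulEquiv.subgroupCongr (map_closure_eq m n d hm hn hdm hdn)).trans
        ((MonoidHom.ofInjective (psi_injective m n d hm hn hd0 hdm hdn)).symm.trans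
          (bsEquiv m n hm hn).symm))⟩
end

section
/- The fundamental group of the torus knot complement, ⟨x, y : xᵖ = y^q⟩ with p, q ≥ 2 coprime, has a proper finite-index subgroup isomorphic to itself; specifically, for any d ≥ 2 coprime to pq, the kernel of the composition of the abelianization-induced map G → ℤ (sending x ↦ q, y ↦ p) with reduction ℤ → ℤ/d is an index-d subgroup of G isomorphic to G. -/
/-!
`G = ⟨x, y : xᵖ = y^q⟩` is the amalgamated product of two copies of `ℤ` along `n ↦ pn` and
`n ↦ qn`, with `x` and `y` the generators of the factors. Multiplication by `d` on both factors
and on the amalgamated `ℤ` induces the endomorphism `ψ : x ↦ xᵈ, y ↦ yᵈ`. As `d` is prime to `p`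
and `q`, a letter outside `pℤ` (resp. `qℤ`) stays outside after multiplication by `d`, so `ψ` maps
reduced words to reduced words and is injective by the normal form theorem.

Since `φ ∘ ψ = d • φ`, the image of `ψ` lies in the kernel `N` of `G → ℤ → ℤ/d`. Together with
the central element `z = xᵖ = y^q` it generates `G` (`x` is a product of powers of `xᵈ` and `xᵖ`,
and similarly for `y`), and `zⁿ ∈ N` forces `d ∣ npq`, hence `d ∣ n` and `zⁿ = ψ(z^(n/d))`. So
`N = ψ(G) ≅ G`, and `N` has index `d` because `φ` is onto, `p` and `q` being coprime.
-/

/-- The relator set for the torus knot group `⟨x, y : xᵖ = y^q⟩`, with `x` the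
generator `true` and `y` the generator `false`. -/
def torusKnotRels (p q : ℕ) : Set (FreeGroup Bool) :=
  {(FreeGroup.of true) ^ p * ((FreeGroup.of false) ^ q)⁻¹}

open Function Multiplicative Monoid

theorem Subgroup.IsComplement.eq_one_of_mem_of_mem {K : Type*} [Group K] {S T : Set K}
    (hST : Subgroup.IsComplement S T) (hS1 : 1 ∈ S) (hT1 : 1 ∈ T) {g : K} (hS : g ∈ S)
    (hT : g ∈ T) : g = 1 :=
  congrArg Subtype.val ((hST.equiv_fst_eq_self_of_mem_of_one_mem hT1 hS).symm.trans
    (hST.equiv_fst_eq_one_of_mem_of_one_mem hS1 hT))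

namespace Monoid.PushoutI

variable {ι : Type*} {G G' : ι → Type*} {H H' : Type*}
  [∀ i, Group (G i)] [∀ i, Group (G' i)] [Group H] [Group H']
  {φ : ∀ i, H →* G i} {φ' : ∀ i, H' →* G' i}

theorem NormalWord.reduced {d : NormalWord.Transversal φ} (w : NormalWord d) :
    Reduced φ w.toWord := fun l hl hr =>
  w.ne_one l hl <| (d.compl l.1).eq_one_of_mem_of_mem (φ l.1).range.one_mem (d.one_mem l.1) hr
    (w.normalized l.1 l.2 hl)

def _root_.Monoid.CoprodI.Word.mapOfInjective (f : ∀ i, G i →* G' i) (hf : ∀ i, Injective (f i))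
    (w : CoprodI.Word G) : CoprodI.Word G' where
  toList := w.toList.map fun l => ⟨l.1, f l.1 l.2⟩
  ne_one l hl := by
    obtain ⟨l', hl', rfl⟩ := List.mem_map.1 hl
    exact (map_ne_one_iff _ (hf l'.1)).2 (w.ne_one l' hl')
  chain_ne := (List.isChain_map _).2 w.chain_ne

variable (f : ∀ i, G i →* G' i) (fH : H →* H') (hcomm : ∀ i, (f i).comp (φ i) = (φ' i).comp fH)

def map : PushoutI φ →* PushoutI φ' :=
  lift (fun i => (of i).comp (f i)) ((base φ').comp fH) fun i => by
    rw [MonoidHom.comp_assoc, hcomm, ← MonoidHom.comp_assoc, of_comp_eq_base]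

@[simp]
theorem map_of (i : ι) (g : G i) : map f fH hcomm (of i g) = of i (f i g) :=
  lift_of _ _ _ g

@[simp]
theorem map_base (h : H) : map f fH hcomm (base φ h) = base φ' (fH h) :=
  lift_base _ _ _ h

theorem map_ofCoprodI_prod (hf : ∀ i, Injective (f i)) (w : CoprodI.Word G) :
    map f fH hcomm (ofCoprodI w.prod) = ofCoprodI (w.mapOfInjective f hf).prod := by
  dsimp only [CoprodI.Word.prod, CoprodI.Word.mapOfInjective]
  simp only [map_list_prod, List.map_map]
  exact congrArg List.prod (List.map_congr_left fun l _ => by simp [ofCoprodI_of])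

theorem map_injective (hφ : ∀ i, Injective (φ i)) (hφ' : ∀ i, Injective (φ' i))
    (hf : ∀ i, Injective (f i)) (hfH : Injective fH)
    (hrange : ∀ i g, f i g ∈ (φ' i).range → g ∈ (φ i).range) :
    Injective (map f fH hcomm) := by
  classical
  obtain ⟨d⟩ := NormalWord.transversal_nonempty φ hφ
  refine (injective_iff_map_eq_one _).2 fun g hg => ?_
  set w := NormalWord.equiv (d := d) g
  have hg_eq : g = base φ w.head * ofCoprodI w.toWord.prod :=
    (NormalWord.equiv.symm_apply_apply g).symm
  rw [hg_eq, map_mul, map_base, map_ofCoprodI_prod _ _ _ hf] at hg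
  have hred : Reduced φ' (w.toWord.mapOfInjective f hf) := fun l hl => by
    obtain ⟨l', hl', rfl⟩ := List.mem_map.1 hl
    exact fun h => w.reduced l' hl' (hrange _ _ h)
  have hempty := hred.eq_empty_of_mem_range hφ'
    ⟨(fH w.head)⁻¹, by rw [map_inv, eq_inv_of_mul_eq_one_right hg]⟩
  have hprod : w.toWord.prod = 1 := by
    rw [CoprodI.Word.prod, List.map_eq_nil_iff.1 (congrArg CoprodI.Word.toList hempty)]
    rfl
  rw [hempty, CoprodI.Word.prod_empty, map_one, mul_one, ← map_one (base φ'), ← map_one fH] at hg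
  rw [hg_eq, hprod, hfH (base_injective hφ' hg), map_one, map_one, mul_one]

end Monoid.PushoutI

theorem Subgroup.mem_of_pow_mem_of_coprime {G : Type*} [Group G] {K : Subgroup G} {g : G}
    {m n : ℕ} (hmn : m.Coprime n) (hm : g ^ m ∈ K) (hn : g ^ n ∈ K) : g ∈ K := by
  obtain ⟨a, b, hab⟩ := Nat.isCoprime_iff_coprime.2 hmn
  have := K.mul_mem (K.zpow_mem hm a) (K.zpow_mem hn b)
  rwa [← zpow_natCast, ← zpow_natCast, ← zpow_mul, ← zpow_mul, ← zpow_add, mul_comm (m : ℤ),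
    mul_comm (n : ℤ), hab, zpow_one] at this

open scoped Pointwise in
theorem Subgroup.eq_of_le_of_sup_eq_top_of_inf_le {G : Type*} [Group G] {K N C : Subgroup G}
    (hC : C ≤ normalizer (K : Set G)) (hKN : K ≤ N) (hKC : K ⊔ C = ⊤) (hNC : N ⊓ C ≤ K) :
    N = K := by
  refine le_antisymm (fun g hg => ?_) hKN
  obtain ⟨k, hk, c, hc, rfl⟩ : g ∈ (K : Set G) * (C : Set G) := by
    rw [← coe_mul_of_right_le_normalizer_left K C hC, hKC]
    trivial
  exact K.mul_mem hk (hNC ⟨(N.mul_mem_cancel_left (hKN hk)).1 hg, hc⟩)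

namespace Multiplicative

theorem mem_range_powMonoidHom_iff {n : ℕ} {a : Multiplicative ℤ} :
    a ∈ (powMonoidHom n).range ↔ (n : ℤ) ∣ a.toAdd := by
  constructor
  · rintro ⟨b, rfl⟩
    exact ⟨b.toAdd, by simp⟩
  · rintro ⟨c, hc⟩
    exact ⟨ofAdd c, by rw [powMonoidHom_apply, ← ofAdd_nsmul, nsmul_eq_mul, ← hc, ofAdd_toAdd]⟩

theorem mem_ker_toMultiplicative_intCast_comp_iff {G : Type*} [Group G]
    (f : G →* Multiplicative ℤ) (d : ℕ) (g : G) :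
    g ∈ ((AddMonoidHom.toMultiplicative (Int.castAddHom (ZMod d))).comp f).ker ↔
      (d : ℤ) ∣ (f g).toAdd :=
  (ZMod.intCast_zmod_eq_zero_iff_dvd _ d)

theorem index_ker_toMultiplicative_intCast_comp {G : Type*} [Group G]
    {f : G →* Multiplicative ℤ} (hf : Surjective f) (d : ℕ) :
    ((AddMonoidHom.toMultiplicative (Int.castAddHom (ZMod d))).comp f).ker.index = d := by
  have hsurj : Surjective ((AddMonoidHom.toMultiplicative (Int.castAddHom (ZMod d))).comp f) :=
    (ZMod.intCast_surjective.comp toAdd.surjective).comp hf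
  rw [Subgroup.index_ker, MonoidHom.range_eq_top.2 hsurj, Subgroup.card_top,
    Nat.card_congr toAdd, Nat.card_zmod]

end Multiplicative

abbrev TorusKnotGroup (p q : ℕ) : Type := PresentedGroup (torusKnotRels p q)

namespace TorusKnotGroup

variable {p q : ℕ} {M : Type*} [Group M]

abbrev x : TorusKnotGroup p q := PresentedGroup.of true

abbrev y : TorusKnotGroup p q := PresentedGroup.of false

theorem x_pow_eq_y_pow : (x : TorusKnotGroup p q) ^ p = y ^ q := by
  have h : PresentedGroup.mk (torusKnotRels p q)
      (FreeGroup.of true ^ p * (FreeGroup.of false ^ q)⁻¹) = 1 :=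
    (QuotientGroup.eq_one_iff _).2 (Subgroup.subset_normalClosure rfl)
  rwa [map_mul, map_inv, map_pow, map_pow, mul_inv_eq_one] at h

def lift (a b : M) (hab : a ^ p = b ^ q) : TorusKnotGroup p q →* M :=
  PresentedGroup.toGroup (f := fun i => if i then a else b) <| by
    rintro r rfl
    simp [hab]

@[simp]
theorem lift_x (a b : M) (hab : a ^ p = b ^ q) : lift a b hab x = a :=
  PresentedGroup.toGroup.of _

@[simp]
theorem lift_y (a b : M) (hab : a ^ p = b ^ q) : lift a b hab y = b :=
  PresentedGroup.toGroup.of _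

theorem hom_ext {f g : TorusKnotGroup p q →* M} (hx : f x = g x) (hy : f y = g y) : f = g :=
  PresentedGroup.ext fun | true => hx | false => hy

theorem eq_top_of_x_mem_of_y_mem {K : Subgroup (TorusKnotGroup p q)} (hx : x ∈ K) (hy : y ∈ K) :
    K = ⊤ :=
  eq_top_iff.2 fun g _ => PresentedGroup.generated_by _ K (fun | true => hx | false => hy) g

theorem x_pow_mem_center :
    (x : TorusKnotGroup p q) ^ p ∈ Subgroup.center (TorusKnotGroup p q) := by
  have hcentralizer : Subgroup.centralizer {(x : TorusKnotGroup p q) ^ p} = ⊤ :=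
    eq_top_of_x_mem_of_y_mem (Subgroup.mem_centralizer_singleton_iff.2 (Commute.self_pow x p).eq)
      (Subgroup.mem_centralizer_singleton_iff.2
        (by rw [x_pow_eq_y_pow]; exact (Commute.self_pow y q).eq))
  exact Subgroup.centralizer_eq_top_iff_subset.1 hcentralizer rfl

section Degree

variable (p q)

def degree : TorusKnotGroup p q →* Multiplicative ℤ :=
  lift (ofAdd (q : ℤ)) (ofAdd (p : ℤ)) <| by
    rw [← ofAdd_nsmul, ← ofAdd_nsmul, nsmul_eq_mul, nsmul_eq_mul, mul_comm]

@[simp]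
theorem degree_x : degree p q x = ofAdd (q : ℤ) := lift_x _ _ _

@[simp]
theorem degree_y : degree p q y = ofAdd (p : ℤ) := lift_y _ _ _

variable {p q}

theorem degree_surjective (hpq : p.Coprime q) : Surjective (degree p q) := by
  obtain ⟨a, b, hab⟩ := Nat.isCoprime_iff_coprime.2 hpq
  have hone : degree p q (y ^ a * x ^ b) = ofAdd 1 := by
    simp only [map_mul, map_zpow, degree_x, degree_y, ← ofAdd_zsmul, ← ofAdd_add, smul_eq_mul, hab]
  intro n
  refine ⟨(y ^ a * x ^ b) ^ n.toAdd, ?_⟩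
  rw [map_zpow, hone, ← ofAdd_zsmul, smul_eq_mul, mul_one, ofAdd_toAdd]

end Degree

def clone (d : ℕ) : TorusKnotGroup p q →* TorusKnotGroup p q :=
  lift (x ^ d) (y ^ d) <| by rw [pow_right_comm, x_pow_eq_y_pow, pow_right_comm]

@[simp]
theorem clone_x (d : ℕ) : clone d (x : TorusKnotGroup p q) = x ^ d := lift_x _ _ _

@[simp]
theorem clone_y (d : ℕ) : clone d (y : TorusKnotGroup p q) = y ^ d := lift_y _ _ _

theorem degree_clone (d : ℕ) (g : TorusKnotGroup p q) :
    degree p q (clone d g) = degree p q g ^ d := by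
  have : (degree p q).comp (clone d) = (powMonoidHom d).comp (degree p q) :=
    hom_ext (by simp) (by simp)
  exact DFunLike.congr_fun this g

variable (p q) in
def amalgamMap : Bool → Multiplicative ℤ →* Multiplicative ℤ
  | true => powMonoidHom p
  | false => powMonoidHom q

theorem of_pow_eq_base (i : Bool) :
    PushoutI.of (φ := amalgamMap p q) i (ofAdd (1 : ℤ)) ^ (if i then p else q) =
      PushoutI.base (amalgamMap p q) (ofAdd 1) := by
  rw [← map_pow]
  cases i <;> exact PushoutI.of_apply_eq_base (amalgamMap p q) _ (ofAdd 1)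

def toAmalgam : TorusKnotGroup p q →* PushoutI (amalgamMap p q) :=
  lift (PushoutI.of true (ofAdd (1 : ℤ))) (PushoutI.of false (ofAdd (1 : ℤ))) <|
    (of_pow_eq_base true).trans (of_pow_eq_base false).symm

def ofAmalgam : PushoutI (amalgamMap p q) →* TorusKnotGroup p q :=
  PushoutI.lift (fun i => zpowersHom _ (PresentedGroup.of i)) (zpowersHom _ (x ^ p)) fun i => by
    ext
    cases i <;> simp [amalgamMap, x_pow_eq_y_pow]

variable (p q) in
def equivAmalgam : TorusKnotGroup p q ≃* PushoutI (amalgamMap p q) :=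
  MonoidHom.toMulEquiv toAmalgam ofAmalgam
    (hom_ext (by simp [toAmalgam, ofAmalgam]) (by simp [toAmalgam, ofAmalgam]))
    (PushoutI.hom_ext_nonempty fun i => by ext; cases i <;> simp [toAmalgam, ofAmalgam])

def amalgamPow (d : ℕ) : PushoutI (amalgamMap p q) →* PushoutI (amalgamMap p q) :=
  PushoutI.map (fun _ => powMonoidHom d) (powMonoidHom d) fun i => by
    ext
    cases i <;> simp [amalgamMap, pow_right_comm]

theorem equivAmalgam_clone (d : ℕ) (g : TorusKnotGroup p q) :
    equivAmalgam p q (clone d g) = amalgamPow d (equivAmalgam p q g) := by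
  have : (equivAmalgam p q).toMonoidHom.comp (clone d) =
      (amalgamPow d).comp (equivAmalgam p q).toMonoidHom :=
    hom_ext (by simp [equivAmalgam, toAmalgam, amalgamPow])
      (by simp [equivAmalgam, toAmalgam, amalgamPow])
  exact DFunLike.congr_fun this g

theorem amalgamMap_injective (hp : p ≠ 0) (hq : q ≠ 0) (i : Bool) :
    Injective (amalgamMap p q i) := by
  cases i
  exacts [pow_left_injective hq, pow_left_injective hp]

theorem amalgamPow_injective {d : ℕ} (hp : p ≠ 0) (hq : q ≠ 0) (hd : d ≠ 0)
    (hdpq : d.Coprime (p * q)) :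
    Injective (amalgamPow (p := p) (q := q) d) := by
  refine PushoutI.map_injective _ _ _ (amalgamMap_injective hp hq) (amalgamMap_injective hp hq)
    (fun _ => pow_left_injective hd) (pow_left_injective hd) fun i g hg => ?_
  obtain ⟨hdp, hdq⟩ := Nat.coprime_mul_iff_right.1 hdpq
  have hdvd (n : ℕ) (hdn : d.Coprime n) : (n : ℤ) ∣ d * g.toAdd → (n : ℤ) ∣ g.toAdd :=
    (Nat.isCoprime_iff_coprime.2 hdn.symm).dvd_of_dvd_mul_left
  cases i <;> simp only [amalgamMap, mem_range_powMonoidHom_iff, powMonoidHom_apply, toAdd_pow,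
    nsmul_eq_mul] at hg ⊢
  exacts [hdvd q hdq hg, hdvd p hdp hg]

theorem clone_injective {d : ℕ} (hp : p ≠ 0) (hq : q ≠ 0) (hd : d ≠ 0)
    (hdpq : d.Coprime (p * q)) :
    Injective (clone (p := p) (q := q) d) := by
  refine Injective.of_comp (f := equivAmalgam p q) ?_
  rw [show equivAmalgam p q ∘ clone d = amalgamPow d ∘ equivAmalgam p q from
    funext (equivAmalgam_clone d)]
  exact (amalgamPow_injective hp hq hd hdpq).comp (equivAmalgam p q).injective

variable (p q) in
abbrev degreeMod (d : ℕ) : TorusKnotGroup p q →* Multiplicative (ZMod d) :=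
  (AddMonoidHom.toMultiplicative (Int.castAddHom (ZMod d))).comp (degree p q)

theorem range_clone_le_ker_degreeMod (d : ℕ) : (clone d).range ≤ (degreeMod p q d).ker := by
  rintro _ ⟨g, rfl⟩
  rw [mem_ker_toMultiplicative_intCast_comp_iff, degree_clone, toAdd_pow, nsmul_eq_mul]
  exact dvd_mul_right _ _

theorem range_clone_sup_zpowers_eq_top {d : ℕ} (hdpq : d.Coprime (p * q)) :
    (clone d).range ⊔ Subgroup.zpowers ((x : TorusKnotGroup p q) ^ p) = ⊤ := by
  obtain ⟨hdp, hdq⟩ := Nat.coprime_mul_iff_right.1 hdpq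
  have hxp : (x : TorusKnotGroup p q) ^ p ∈ (clone d).range ⊔ Subgroup.zpowers (x ^ p) :=
    Subgroup.mem_sup_right (Subgroup.mem_zpowers _)
  refine eq_top_of_x_mem_of_y_mem ?_ ?_
  · exact Subgroup.mem_of_pow_mem_of_coprime hdp (Subgroup.mem_sup_left ⟨x, clone_x d⟩) hxp
  · exact Subgroup.mem_of_pow_mem_of_coprime hdq (Subgroup.mem_sup_left ⟨y, clone_y d⟩)
      (by rwa [← x_pow_eq_y_pow])

theorem ker_degreeMod_inf_zpowers_le_range_clone {d : ℕ} (hdpq : d.Coprime (p * q)) :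
    (degreeMod p q d).ker ⊓ Subgroup.zpowers (x ^ p) ≤ (clone d).range := by
  intro g hg
  obtain ⟨hker, hz⟩ := Subgroup.mem_inf.1 hg
  obtain ⟨n, rfl⟩ := Subgroup.mem_zpowers_iff.1 hz
  rw [mem_ker_toMultiplicative_intCast_comp_iff, map_zpow, map_pow, degree_x, toAdd_zpow,
    toAdd_pow, toAdd_ofAdd, nsmul_eq_mul, smul_eq_mul, mul_comm, ← Nat.cast_mul] at hker
  obtain ⟨m, rfl⟩ : (d : ℤ) ∣ n := (Nat.isCoprime_iff_coprime.2 hdpq).dvd_of_dvd_mul_left hker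
  exact ⟨(x ^ p) ^ m, by rw [map_zpow, map_pow, clone_x, pow_right_comm, zpow_mul, zpow_natCast]⟩

theorem ker_degreeMod_eq_range_clone {d : ℕ} (hdpq : d.Coprime (p * q)) :
    (degreeMod p q d).ker = (clone d).range :=
  Subgroup.eq_of_le_of_sup_eq_top_of_inf_le
    ((Subgroup.zpowers_le.2 x_pow_mem_center).trans (Subgroup.center_le_normalizer _))
    (range_clone_le_ker_degreeMod d) (range_clone_sup_zpowers_eq_top hdpq)
    (ker_degreeMod_inf_zpowers_le_range_clone hdpq)

end TorusKnotGroup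

open TorusKnotGroup

/-- The torus knot group `G = ⟨x, y : xᵖ = y^q⟩` (`p, q ≥ 2` coprime) has, for every
`d ≥ 2` coprime to `pq`, a proper finite-index clone: there is a homomorphism
`φ : G → ℤ` with `φ(x) = q` and `φ(y) = p`, and the kernel of its composition with
reduction mod `d` is a subgroup of index `d` isomorphic to `G`. -/
theorem torusKnotGroup_finite_index_clone (p q d : ℕ)
    (hp : 2 ≤ p) (hq : 2 ≤ q) (hpq : Nat.Coprime p q)
    (hd : 2 ≤ d) (hdpq : Nat.Coprime d (p * q)) :
    ∃ φ : PresentedGroup (torusKnotRels p q) →* Multiplicative ℤ,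
      φ (PresentedGroup.of true) = Multiplicative.ofAdd (q : ℤ) ∧
      φ (PresentedGroup.of false) = Multiplicative.ofAdd (p : ℤ) ∧
      ((AddMonoidHom.toMultiplicative (Int.castAddHom (ZMod d))).comp φ).ker.index = d ∧
      Nonempty
        ((((AddMonoidHom.toMultiplicative (Int.castAddHom (ZMod d))).comp φ).ker : Subgroup (PresentedGroup (torusKnotRels p q))) ≃*
          PresentedGroup (torusKnotRels p q)) := by
  refine ⟨degree p q, degree_x p q, degree_y p q,
    index_ker_toMultiplicative_intCast_comp (degree_surjective hpq) d, ⟨?_⟩⟩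
  have hclone := clone_injective (by omega) (by omega) (by omega) hdpq
  exact (MulEquiv.subgroupCongr (ker_degreeMod_eq_range_clone hdpq)).trans
    (MonoidHom.ofInjective hclone).symm
end
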